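/- arXiv:1306.4081 — 2 statements merged into one kernel-verified Lean document; each statement's English description precedes it below -/
import Mathlib

section
/- For real z and τ > 0, the Mordell integral h(z, τ) := 2 e^{πi/4} ∫_0^∞ e^{−πτy²} cosh(2πz e^{πi/4} y)/cosh(π e^{πi/4} y) dy satisfies h(z, τ) + h(z+1, τ) = (2/√τ) e^{πi/4 + (πi/τ)(z + 1/2)²}. -/
/-
Put `θ = e^{πi/4}`. With `p = π(2z+1)θy` and `q = πθy` the two numerators are `cosh (p ∓ q)`, and
`cosh (p - q) + cosh (p + q) = 2 cosh p cosh q` cancels the common denominator `cosh q`. What is left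
is the even function `2 e^{-πτy²} cosh (π(2z+1)θy)`, whose integral over `(0, ∞)` is half a full-line
Gaussian integral; completing the square and `θ² = i` give the exponent `πi(z+1/2)²/τ`.
Each integral converges on its own because `|cosh (πθy)| ≥ 1`: on the ray `θℝ` real and imaginary
parts agree, and `|cosh w|² = sinh² (Re w) + cos² (Im w)`.
-/

open Complex Real

/-- The Mordell integral for real `z` and `τ > 0`, defined via the rotated contour. -/
noncomputable def mordellH (z τ : ℝ) : ℂ :=
  2 * Complex.exp (Real.pi * Complex.I / 4) *
    ∫ y in Set.Ioi (0 : ℝ),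
      Complex.exp (-(Real.pi * τ * y ^ 2)) *
        Complex.cosh (2 * Real.pi * z * Complex.exp (Real.pi * Complex.I / 4) * y) /
          Complex.cosh (Real.pi * Complex.exp (Real.pi * Complex.I / 4) * y)

open MeasureTheory Set

lemma Complex.normSq_cosh (w : ℂ) :
    normSq (cosh w) = Real.sinh w.re ^ 2 + Real.cos w.im ^ 2 := by
  conv_lhs => rw [← re_add_im w]
  rw [cosh_add, cosh_mul_I, sinh_mul_I, ← ofReal_cosh, ← ofReal_sinh, ← ofReal_cos,
    ← ofReal_sin, ← mul_assoc, ← ofReal_mul, ← ofReal_mul, normSq_add_mul_I]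
  nlinarith [Real.cosh_sq w.re, Real.sin_sq_add_cos_sq w.im]

lemma Real.sq_le_sinh_sq (x : ℝ) : x ^ 2 ≤ Real.sinh x ^ 2 := by
  rcases le_total 0 x with h | h
  · nlinarith [Real.self_le_sinh_iff.mpr h]
  · nlinarith [Real.sinh_le_self_iff.mpr h]

lemma Complex.one_le_norm_cosh_of_abs_im_le_abs_re {w : ℂ} (h : |w.im| ≤ |w.re|) :
    1 ≤ ‖cosh w‖ := by
  have : 1 ≤ ‖cosh w‖ ^ 2 := by
    rw [← normSq_eq_norm_sq, normSq_cosh]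
    nlinarith [Real.sin_sq_add_cos_sq w.im, Real.sin_sq_le_sq (x := w.im), Real.sq_le_sinh_sq w.re,
      sq_le_sq.mpr h]
  exact one_le_sq_iff_one_le_abs _ |>.mp this |>.trans_eq (abs_norm _)

lemma exp_pi_mul_I_div_four_sq : cexp (π * I / 4) ^ 2 = I := by
  rw [← Complex.exp_nat_mul]
  convert exp_pi_div_two_mul_I using 2
  push_cast; ring

lemma cexp_neg_mul_sq_mul_cosh (b c : ℂ) (x : ℝ) :
    cexp (-b * x ^ 2) * cosh (c * x) =
      (cexp (-b * x ^ 2 + c * x + 0) + cexp (-b * x ^ 2 + -c * x + 0)) / 2 := by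
  rw [Complex.cosh]
  simp only [add_zero, Complex.exp_add, neg_mul]; ring

section Gaussian

variable {b : ℂ}

lemma integrable_cexp_neg_mul_sq_mul_cosh (hb : 0 < b.re) (c : ℂ) :
    Integrable (fun x : ℝ ↦ cexp (-b * x ^ 2) * cosh (c * x)) := by
  simp_rw [cexp_neg_mul_sq_mul_cosh]
  exact ((integrable_cexp_quadratic hb c 0).add (integrable_cexp_quadratic hb (-c) 0)).div_const 2

lemma integral_cexp_neg_mul_sq_mul_cosh (hb : 0 < b.re) (c : ℂ) :
    ∫ x : ℝ, cexp (-b * x ^ 2) * cosh (c * x) = (π / b) ^ (1 / 2 : ℂ) * cexp (c ^ 2 / (4 * b)) := by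
  have hb' : (-b).re < 0 := by simpa using hb
  simp_rw [cexp_neg_mul_sq_mul_cosh, integral_div]
  rw [integral_add (integrable_cexp_quadratic' hb' c 0) (integrable_cexp_quadratic' hb' (-c) 0),
    integral_cexp_quadratic hb', integral_cexp_quadratic hb']
  have hb0 : b ≠ 0 := by rintro rfl; simp at hb
  rw [neg_neg, neg_sq, show (0 : ℂ) - c ^ 2 / (4 * -b) = c ^ 2 / (4 * b) by field_simp; ring]
  ring

lemma integral_eq_two_smul_integral_Ioi_of_even {E : Type*} [NormedAddCommGroup E]
    [NormedSpace ℝ E] {f : ℝ → E} (hf : Integrable f) (heven : ∀ x, f (-x) = f x) :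
    ∫ x, f x = 2 • ∫ x in Ioi 0, f x := by
  rw [← intervalIntegral.integral_Iic_add_Ioi hf.integrableOn hf.integrableOn, two_smul,
    ← neg_zero, ← integral_comp_neg_Ioi, neg_zero]
  simp_rw [heven]

lemma integral_Ioi_cexp_neg_mul_sq_mul_cosh (hb : 0 < b.re) (c : ℂ) :
    ∫ x in Ioi (0 : ℝ), cexp (-b * x ^ 2) * cosh (c * x) =
      (π / b) ^ (1 / 2 : ℂ) * cexp (c ^ 2 / (4 * b)) / 2 := by
  rw [← integral_cexp_neg_mul_sq_mul_cosh hb,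
    integral_eq_two_smul_integral_Ioi_of_even (integrable_cexp_neg_mul_sq_mul_cosh hb c)]
  · simp
  · intro x
    simp only [ofReal_neg, neg_sq, mul_neg, Complex.cosh_neg]

end Gaussian

lemma exp_pi_mul_I_div_four_re_eq_im : (cexp (π * I / 4)).re = (cexp (π * I / 4)).im := by
  have : (π * I / 4 : ℂ) = ((π / 4 : ℝ) : ℂ) * I := by push_cast; ring
  simp [this, exp_re, exp_im, Real.cos_pi_div_four, Real.sin_pi_div_four]

local notation "θ" => Complex.exp (Real.pi * Complex.I / 4)

noncomputable def mordellIntegrand (z τ y : ℝ) : ℂ :=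
  cexp (-(π * τ * y ^ 2)) * cosh (2 * π * z * θ * y) / cosh (π * θ * y)

lemma one_le_norm_cosh_pi_mul_exp_pi_mul_I_div_four (y : ℝ) : 1 ≤ ‖cosh (π * θ * y)‖ := by
  apply one_le_norm_cosh_of_abs_im_le_abs_re
  simp only [re_mul_ofReal, im_mul_ofReal, re_ofReal_mul, im_ofReal_mul, exp_pi_mul_I_div_four_re_eq_im,
    le_refl]

lemma cosh_pi_mul_exp_pi_mul_I_div_four_ne_zero (y : ℝ) : cosh (π * θ * y) ≠ 0 :=
  norm_pos_iff.mp (one_pos.trans_le (one_le_norm_cosh_pi_mul_exp_pi_mul_I_div_four y))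

lemma integrableOn_mordellIntegrand (z : ℝ) {τ : ℝ} (hτ : 0 < τ) :
    IntegrableOn (mordellIntegrand z τ) (Ioi 0) := by
  have hb : 0 < ((π : ℂ) * τ).re := by simpa using mul_pos pi_pos hτ
  have hsech : Continuous fun y : ℝ ↦ (cosh (π * θ * y))⁻¹ :=
    (by fun_prop : Continuous fun y : ℝ ↦ cosh (π * θ * y)).inv₀
      cosh_pi_mul_exp_pi_mul_I_div_four_ne_zero
  refine Integrable.integrableOn ?_
  convert (integrable_cexp_neg_mul_sq_mul_cosh hb (2 * π * z * θ)).mul_bdd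
    hsech.aestronglyMeasurable (c := 1) (.of_forall fun y ↦ ?_) using 2 with y
  · simp [mordellIntegrand, div_eq_mul_inv, neg_mul]
  · rw [norm_inv]
    exact inv_le_one_of_one_le₀ (one_le_norm_cosh_pi_mul_exp_pi_mul_I_div_four y)

lemma mordellIntegrand_add_mordellIntegrand_add_one (z τ y : ℝ) :
    mordellIntegrand z τ y + mordellIntegrand (z + 1) τ y =
      2 * (cexp (-(π * τ) * y ^ 2) * cosh (π * (2 * z + 1) * θ * y)) := by
  have hq := cosh_pi_mul_exp_pi_mul_I_div_four_ne_zero y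
  simp only [mordellIntegrand]
  set p : ℂ := π * (2 * z + 1) * θ * y
  set q : ℂ := π * θ * y
  have h₁ : 2 * π * z * θ * y = p - q := by ring
  have h₂ : 2 * π * ((z + 1 : ℝ) : ℂ) * θ * y = p + q := by push_cast; ring
  rw [h₁, h₂, Complex.cosh_sub, Complex.cosh_add]
  field_simp
  ring

lemma ofReal_inv_cpow_one_half {τ : ℝ} (hτ : 0 ≤ τ) :
    (τ : ℂ)⁻¹ ^ (1 / 2 : ℂ) = (Real.sqrt τ : ℂ)⁻¹ := by
  rw [← ofReal_inv, ← ofReal_one, ← ofReal_ofNat, ← ofReal_div, ← ofReal_cpow (inv_nonneg.mpr hτ),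
    ← Real.sqrt_eq_rpow, Real.sqrt_inv, ofReal_inv]

theorem mordell_shift (z τ : ℝ) (hτ : 0 < τ) :
    mordellH z τ + mordellH (z + 1) τ =
      2 / Real.sqrt τ *
        Complex.exp (Real.pi * Complex.I / 4 +
          Real.pi * Complex.I / τ * (z + 1 / 2) ^ 2) := by
  have hb : 0 < ((π : ℂ) * τ).re := by simpa using mul_pos pi_pos hτ
  have hexponent : (π * (2 * z + 1) * θ) ^ 2 / (4 * (π * τ)) = π * I / τ * (z + 1 / 2) ^ 2 := by
    have hτ0 : (τ : ℂ) ≠ 0 := ofReal_ne_zero.mpr hτ.ne'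
    rw [mul_pow, exp_pi_mul_I_div_four_sq]
    field_simp
    ring
  calc mordellH z τ + mordellH (z + 1) τ
      = 2 * θ * ∫ y in Ioi 0, mordellIntegrand z τ y + mordellIntegrand (z + 1) τ y := by
        rw [integral_add (integrableOn_mordellIntegrand z hτ)
          (integrableOn_mordellIntegrand (z + 1) hτ), mul_add]
        rfl
    _ = 2 * θ * (2 * ((π / (π * τ)) ^ (1 / 2 : ℂ) *
          cexp ((π * (2 * z + 1) * θ) ^ 2 / (4 * (π * τ))) / 2)) := by
        simp_rw [mordellIntegrand_add_mordellIntegrand_add_one, integral_const_mul,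
          integral_Ioi_cexp_neg_mul_sq_mul_cosh hb]
    _ = _ := by
        rw [div_mul_cancel_left₀ (ofReal_ne_zero.mpr pi_ne_zero), ofReal_inv_cpow_one_half hτ.le,
          hexponent, Complex.exp_add]
        ring
end

section
/- With coefficients defined by a_{0,1} = 1 and a_{j+1,k} = −(2πi/n)((k−1)a_{j,k−1} + (k/n)a_{j,k}𝟙_{k≤j+1}), the bound |a_{j,k}| ≤ (4πj/n)^j holds for all j ≥ 1 and 1 ≤ k ≤ j+1. -/
/-!
The bound `(4πj/n)^j` also holds at `j = 0`, where it reads `‖a 0 1‖ ≤ 1` because `0 ^ 0 = 1`,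
so one can induct on `j` over the range `1 ≤ k ≤ j + 1`. Inside that range the recursion reads
`a j (k - 1)` only for `k ≥ 2` and `a j k` only for `k ≤ j + 1`, with weights `k - 1 ≤ j + 1` and
`k / n ≤ j + 1`; so each step multiplies the bound by at most `(2π/n) · 2(j + 1)`, and
`(4πj/n)^j ≤ (4π(j+1)/n)^j` closes the induction.
-/

open Complex Real

lemma norm_neg_two_pi_I_div_natCast (n : ℕ) : ‖-(2 * π * I / n)‖ = 2 * π / n := by
  rw [norm_neg, norm_div, norm_mul, norm_mul, norm_I, Complex.norm_natCast, Complex.norm_two,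
    Complex.norm_real, Real.norm_of_nonneg pi_pos.le, mul_one]

lemma norm_natCast_sub_one_mul_le {j k : ℕ} (hk : 1 ≤ k) (hkj : k ≤ j + 2) {x : ℂ} {B : ℝ}
    (hB : 0 ≤ B) (hx : 2 ≤ k → ‖x‖ ≤ B) : ‖((k : ℂ) - 1) * x‖ ≤ (j + 1) * B := by
  obtain rfl | hk2 : k = 1 ∨ 2 ≤ k := by omega
  · simp only [Nat.cast_one, sub_self, zero_mul, norm_zero]
    positivity
  have hcast : ((k : ℂ) - 1) = ((k - 1 : ℕ) : ℂ) := by push_cast [Nat.cast_sub hk]; ring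
  rw [norm_mul, hcast, Complex.norm_natCast]
  gcongr
  · exact_mod_cast (by omega : k - 1 ≤ j + 1)
  · exact hx hk2

lemma norm_natCast_div_mul_indicator_le {n j k : ℕ} (hn : 1 ≤ n) {y : ℂ} {B : ℝ}
    (hB : 0 ≤ B) (hy : k ≤ j + 1 → ‖y‖ ≤ B) :
    ‖(k : ℂ) / n * y * (if k ≤ j + 1 then 1 else 0)‖ ≤ (j + 1) * B := by
  split_ifs with hkj
  · have hkn : (k : ℝ) / n ≤ j + 1 :=
      (div_le_self k.cast_nonneg (by exact_mod_cast hn)).trans (by exact_mod_cast hkj)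
    rw [mul_one, norm_mul, norm_div, Complex.norm_natCast, Complex.norm_natCast]
    exact mul_le_mul hkn (hy hkj) (norm_nonneg _) (by positivity)
  · simp only [mul_zero, norm_zero]
    positivity

lemma mul_mul_pow_le_pow_succ {c x y : ℝ} (hc : 0 ≤ c) (hx : 0 ≤ x) (hxy : x ≤ y) (j : ℕ) :
    c * y * (c * x) ^ j ≤ (c * y) ^ (j + 1) := by
  rw [pow_succ']
  have hcy : 0 ≤ c * y := mul_nonneg hc (hx.trans hxy)
  gcongr

theorem coefficient_recursion_bound_general
    (n : ℕ) (hn : 1 ≤ n) (a : ℕ → ℕ → ℂ)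
    (ha01 : a 0 1 = 1)
    (haRec : ∀ j k : ℕ, 1 ≤ k → k ≤ j + 2 →
      a (j + 1) k = -(2 * Real.pi * Complex.I / n) *
        ((k - 1 : ℂ) * a j (k - 1) +
          (k : ℂ) / n * a j k * (if k ≤ j + 1 then 1 else 0))) :
    ∀ j k : ℕ, 1 ≤ j → 1 ≤ k → k ≤ j + 1 →
      ‖a j k‖ ≤ (4 * Real.pi * j / n) ^ j := by
  suffices h : ∀ j k : ℕ, 1 ≤ k → k ≤ j + 1 → ‖a j k‖ ≤ (4 * π / n * j) ^ j by
    intro j k _ hk hkj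
    simpa only [mul_div_right_comm] using h j k hk hkj
  intro j
  induction j with
  | zero =>
    intro k hk hk1
    obtain rfl : k = 1 := by omega
    simp [ha01]
  | succ j ih =>
    intro k hk hkj
    set B := (4 * π / n * j) ^ j
    have hB : 0 ≤ B := by positivity
    have hbracket := norm_add_le_of_le
      (norm_natCast_sub_one_mul_le hk hkj hB fun hk2 => ih (k - 1) (by omega) (by omega))
      (norm_natCast_div_mul_indicator_le hn hB (ih k hk))
    rw [haRec j k hk hkj, norm_mul, norm_neg_two_pi_I_div_natCast]
    calc 2 * π / n * ‖_‖ ≤ 2 * π / n * ((j + 1) * B + (j + 1) * B) := by gcongr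
      _ = 4 * π / n * (j + 1 : ℕ) * B := by push_cast; ring
      _ ≤ (4 * π / n * (j + 1 : ℕ)) ^ (j + 1) :=
          mul_mul_pow_le_pow_succ (by positivity) j.cast_nonneg (Nat.cast_le.mpr j.le_succ) j

theorem coefficient_recursion_bound
    (n : ℕ) (hn : 1 ≤ n) (a : ℕ → ℕ → ℂ)
    (ha01 : a 0 1 = 1)
    (ha0 : ∀ j : ℕ, a j 0 = 0)
    (haBig : ∀ j k : ℕ, j + 1 < k → a j k = 0)
    (haRec : ∀ j k : ℕ, 1 ≤ k → k ≤ j + 2 →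
      a (j + 1) k = -(2 * Real.pi * Complex.I / n) *
        ((k - 1 : ℂ) * a j (k - 1) +
          (k : ℂ) / n * a j k * (if k ≤ j + 1 then 1 else 0))) :
    ∀ j k : ℕ, 1 ≤ j → 1 ≤ k → k ≤ j + 1 →
      ‖a j k‖ ≤ (4 * Real.pi * j / n) ^ j :=
  coefficient_recursion_bound_general n hn a ha01 haRec
end
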